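/- For n ≥ 1, the number of distinct net-degree sequences of bidirected graphs on vertex set [n] equals ((2n−1)^n + 1)/2. -/

import Mathlib

/-- A bidirected graph (bigraph) on vertex set `Fin n`, encoded by its bidirection
function: `bd u v` is the local orientation `τ(u, uv) ∈ {−1,+1}` of the edge `uv` at its
endpoint `u` if `uv` is an edge, and `0` if `u` and `v` are not joined by an edge. -/
structure Bigraph (n : ℕ) where
  bd : Fin n → Fin n → ℤ
  bd_mem : ∀ u v, bd u v = -1 ∨ bd u v = 0 ∨ bd u v = 1
  loopless : ∀ v, bd v v = 0
  adj_symm : ∀ u v, bd u v = 0 ↔ bd v u = 0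

/-- The net-degree of a node `v`: the sum of the local orientations at `v` of all edges
incident to `v`. -/
def Bigraph.netDeg {n : ℕ} (B : Bigraph n) (v : Fin n) : ℤ := ∑ u, B.bd v u

/-!
The net-degree sequences are exactly the `d` with `|d v| < n` for all `v` and `∑ v, d v` even.
Necessity: `|d v|` is at most the degree of `v` in the underlying graph, and `d v` has the parity
of that degree, so the handshake lemma makes the sum even. Sufficiency: the orientations at the
two ends of an edge are independent, so on any graph with `|d v| ≤ deg v ≡ d v (mod 2)` one can
orient `(deg v + d v) / 2` of the edges at `v` positively; such a graph is the complete graph with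
a perfect matching removed on the (even) set of vertices where `d v ≢ n - 1 (mod 2)`.
Among the `(2n - 1)^n` vectors in `(-n, n)^n`, the difference between the numbers with
even and odd sum is `(∑_{|x| < n} (-1)^x)^n = ((-1)^(n-1))^n = 1`.
-/

open Finset

namespace Bigraph

variable {n : ℕ}

def graph (B : Bigraph n) : SimpleGraph (Fin n) where
  Adj u v := B.bd u v ≠ 0
  symm := ⟨fun u v h => (B.adj_symm u v).not.mp h⟩
  loopless := ⟨fun v h => h (B.loopless v)⟩

instance (B : Bigraph n) : DecidableRel B.graph.Adj :=
  fun u v => inferInstanceAs (Decidable (B.bd u v ≠ 0))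

lemma abs_bd (B : Bigraph n) (u v : Fin n) :
    |B.bd u v| = if B.graph.Adj u v then 1 else 0 := by
  change _ = ite (B.bd u v ≠ 0) _ _
  rcases B.bd_mem u v with h | h | h <;> simp [h]

lemma bd_cast_zmod_two (B : Bigraph n) (u v : Fin n) :
    (B.bd u v : ZMod 2) = if B.graph.Adj u v then 1 else 0 := by
  change _ = ite (B.bd u v ≠ 0) _ _
  rcases B.bd_mem u v with h | h | h <;> simp [h]

lemma abs_netDeg_le_degree (B : Bigraph n) (v : Fin n) : |B.netDeg v| ≤ B.graph.degree v :=
  calc |B.netDeg v| ≤ ∑ u, |B.bd v u| := abs_sum_le_sum_abs _ _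
    _ = B.graph.degree v := by
      rw [← B.graph.card_neighborFinset_eq_degree, B.graph.neighborFinset_eq_filter]
      simp only [abs_bd, sum_boole]

lemma abs_netDeg_lt (B : Bigraph n) (v : Fin n) : |B.netDeg v| < n := by
  have := B.graph.degree_lt_card_verts v
  rw [Fintype.card_fin] at this
  exact (B.abs_netDeg_le_degree v).trans_lt (by exact_mod_cast this)

lemma netDeg_cast_zmod_two (B : Bigraph n) (v : Fin n) :
    (B.netDeg v : ZMod 2) = B.graph.degree v := by
  rw [netDeg, Int.cast_sum, ← B.graph.card_neighborFinset_eq_degree, B.graph.neighborFinset_eq_filter]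
  simp only [bd_cast_zmod_two, sum_boole]

lemma even_sum_netDeg (B : Bigraph n) : Even (∑ v, B.netDeg v) := by
  rw [← ZMod.intCast_eq_zero_iff_even, Int.cast_sum]
  simp only [netDeg_cast_zmod_two]
  rw [← Nat.cast_sum, B.graph.sum_degrees_eq_twice_card_edges, Nat.cast_mul]
  exact zero_mul _

def orient (G : SimpleGraph (Fin n)) [DecidableRel G.Adj] (P : Fin n → Finset (Fin n))
    (hP : ∀ v, P v ⊆ G.neighborFinset v) : Bigraph n where
  bd v u := if u ∈ P v then 1 else if G.Adj v u then -1 else 0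
  bd_mem v u := by split_ifs <;> simp
  loopless v := by
    have : v ∉ P v := fun h => G.irrefl ((G.mem_neighborFinset v v).mp (hP v h))
    simp [this]
  adj_symm u v := by
    have hbd : ∀ a b, (if b ∈ P a then (1 : ℤ) else if G.Adj a b then -1 else 0) = 0 ↔
        ¬ G.Adj a b := fun a b => by
      by_cases hb : b ∈ P a
      · simp [hb, (G.mem_neighborFinset a b).mp (hP a hb)]
      · by_cases hab : G.Adj a b <;> simp [hb, hab]
    rw [hbd, hbd, G.adj_comm]

lemma netDeg_orient (G : SimpleGraph (Fin n)) [DecidableRel G.Adj]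
    (P : Fin n → Finset (Fin n)) (hP : ∀ v, P v ⊆ G.neighborFinset v) (v : Fin n) :
    (orient G P hP).netDeg v = 2 * #(P v) - G.degree v := by
  have hsplit : ∀ u, (orient G P hP).bd v u =
      2 * (if u ∈ P v then 1 else 0) - (if u ∈ G.neighborFinset v then 1 else 0) := fun u => by
    by_cases hu : u ∈ P v
    · simp [orient, hu, hP v hu]
    · by_cases hvu : G.Adj v u <;> simp [orient, hu, hvu]
  simp only [netDeg, hsplit, sum_sub_distrib, ← mul_sum, sum_boole, filter_mem_eq_inter,
    univ_inter, G.card_neighborFinset_eq_degree]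

theorem exists_netDeg_eq_of_abs_le_degree (G : SimpleGraph (Fin n)) [DecidableRel G.Adj]
    (d : Fin n → ℤ) (hle : ∀ v, |d v| ≤ G.degree v) (hpar : ∀ v, Even (d v + G.degree v)) :
    ∃ B : Bigraph n, B.netDeg = d := by
  have hP : ∀ v, ∃ P ⊆ G.neighborFinset v, 2 * (#P : ℤ) = d v + G.degree v := fun v => by
    obtain ⟨k, hk⟩ := hpar v
    have := abs_le.mp (hle v)
    obtain ⟨P, hPsub, hPcard⟩ := exists_subset_card_eq (s := G.neighborFinset v) (n := k.toNat)
      (by rw [G.card_neighborFinset_eq_degree]; omega)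
    exact ⟨P, hPsub, by omega⟩
  choose P hPsub hPcard using hP
  exact ⟨orient G P hPsub, funext fun v => by rw [netDeg_orient, hPcard]; ring⟩

end Bigraph

lemma Int.even_sum_iff_even_card_odd {ι : Type*} {s : Finset ι} (f : ι → ℤ) :
    Even (∑ i ∈ s, f i) ↔ Even #{i ∈ s | Odd (f i)} := by
  have hcast : ∀ i, (f i : ZMod 2) = if Odd (f i) then 1 else 0 := fun i => by
    split_ifs with h
    · exact ZMod.intCast_eq_one_iff_odd.mpr h
    · exact ZMod.intCast_eq_zero_iff_even.mpr (Int.not_odd_iff_even.mp h)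
  rw [← ZMod.intCast_eq_zero_iff_even, ← ZMod.natCast_eq_zero_iff_even, Int.cast_sum]
  simp only [hcast, sum_boole]

theorem SimpleGraph.exists_degree_eq_of_even_card {V : Type*} [Fintype V] [DecidableEq V]
    {s : Finset V} (hs : Even #s) :
    ∃ (G : SimpleGraph V) (_ : DecidableRel G.Adj),
      ∀ v, G.degree v = Fintype.card V - 1 - if v ∈ s then 1 else 0 := by
  classical
  obtain ⟨M, hMverts, hM⟩ := (isClique_univ.mpr rfl |>.subset (Set.subset_univ (s : Set V))
    |>.even_iff_exists_isMatching s.finite_toSet).mp (by rwa [Set.ncard_coe_finset])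
  refine ⟨M.spanningCoeᶜ, inferInstance, fun v => ?_⟩
  rw [degree_compl, Subgraph.degree_spanningCoe]
  split_ifs with hv
  · rw [(Subgraph.isMatching_iff_forall_degree.mp hM) v (by rwa [hMverts])]
  · rw [Subgraph.degree_of_notMem_verts (by rwa [hMverts])]

theorem Bigraph.exists_netDeg_eq_iff {n : ℕ} (d : Fin n → ℤ) :
    (∃ B : Bigraph n, B.netDeg = d) ↔ (∀ v, |d v| < n) ∧ Even (∑ v, d v) := by
  constructor
  · rintro ⟨B, rfl⟩
    exact ⟨B.abs_netDeg_lt, B.even_sum_netDeg⟩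
  rintro ⟨hlt, heven⟩
  -- vertices at which `d` has the wrong parity for the complete graph lose one edge each
  set s : Finset (Fin n) := {v | Odd (d v + (n - 1))}
  have hs : Even #s := by
    rw [← Int.even_sum_iff_even_card_odd, sum_add_distrib, sum_const, card_univ, Fintype.card_fin, nsmul_eq_mul]
    exact heven.add (Int.even_mul_pred_self n)
  obtain ⟨G, _, hG⟩ := SimpleGraph.exists_degree_eq_of_even_card hs
  refine Bigraph.exists_netDeg_eq_of_abs_le_degree G d (fun v => ?_) (fun v => ?_) <;>
  · have hv := abs_lt.mp (hlt v)
    have hodd : v ∈ s ↔ (d v + (n - 1)) % 2 = 1 := by simp [s, Int.odd_iff]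
    simp only [hG v, Fintype.card_fin, abs_le, Int.even_iff]
    split_ifs with hvs
    · have := hodd.mp hvs; omega
    · have := mt hodd.mpr hvs; omega

lemma Int.negOnePow_sum {ι : Type*} (s : Finset ι) (f : ι → ℤ) :
    (∑ i ∈ s, f i).negOnePow = ∏ i ∈ s, (f i).negOnePow := by
  induction s using Finset.cons_induction with
  | empty => simp
  | cons a s ha ih => rw [sum_cons, prod_cons, Int.negOnePow_add, ih]

lemma two_mul_card_filter_even_sum_piFinset {ι : Type*} [Fintype ι] [DecidableEq ι]
    (I : Finset ℤ) :
    2 * (#{d ∈ Fintype.piFinset fun _ : ι => I | Even (∑ i, d i)} : ℤ) =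
      #I ^ Fintype.card ι + (∑ x ∈ I, (x.negOnePow : ℤ)) ^ Fintype.card ι := by
  set F := Fintype.piFinset fun _ : ι => I
  have hcard : (#{d ∈ F | Even (∑ i, d i)} : ℤ) + #{d ∈ F | ¬ Even (∑ i, d i)} =
      #I ^ Fintype.card ι := by
    rw [← Nat.cast_add, card_filter_add_card_filter_not, Fintype.card_piFinset, prod_const,
      card_univ, Nat.cast_pow]
  -- the signed count of `F` by parity of the coordinate sum factorises over the coordinates
  have hsign : (#{d ∈ F | Even (∑ i, d i)} : ℤ) - #{d ∈ F | ¬ Even (∑ i, d i)} =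
      (∑ x ∈ I, (x.negOnePow : ℤ)) ^ Fintype.card ι := by
    have hval : ∀ x : ℤ, (x.negOnePow : ℤ) = if Even x then 1 else -1 := fun x => by
      split_ifs with h
      · simp [Int.negOnePow_even _ h]
      · simp [Int.negOnePow_odd _ (Int.not_even_iff_odd.mp h)]
    calc _ = ∑ d ∈ F, ((∑ i, d i).negOnePow : ℤ) := by
          simp only [hval, sum_ite, sum_const, nsmul_eq_mul, mul_one, mul_neg, sub_eq_add_neg]
      _ = ∏ _i : ι, ∑ x ∈ I, (x.negOnePow : ℤ) := by
          simp only [prod_univ_sum, F, Int.negOnePow_sum, Units.coe_prod]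
      _ = _ := by rw [prod_const, card_univ]
  linear_combination hcard + hsign

lemma sum_negOnePow_Icc (m : ℕ) :
    ∑ x ∈ Icc (-(m : ℤ)) m, (x.negOnePow : ℤ) = (-1) ^ m := by
  induction m with
  | zero => simp
  | succ m ih =>
    have hIcc : Icc (-((m + 1 : ℕ) : ℤ)) ((m + 1 : ℕ) : ℤ) =
        cons (-((m + 1 : ℕ) : ℤ)) (cons ((m + 1 : ℕ) : ℤ) (Icc (-(m : ℤ)) m) (by simp))
          (by simp; omega) := by
      ext x
      simp only [mem_Icc, mem_cons]
      omega
    rw [hIcc, sum_cons, sum_cons, ih, Int.negOnePow_neg, Int.coe_negOnePow_natCast, pow_succ]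
    ring

lemma sum_negOnePow_Ioo_pow_self (n : ℕ) :
    (∑ x ∈ Ioo (-(n : ℤ)) n, (x.negOnePow : ℤ)) ^ n = 1 := by
  cases n with
  | zero => rfl
  | succ m =>
    have hIoo : Ioo (-((m + 1 : ℕ) : ℤ)) ((m + 1 : ℕ) : ℤ) = Icc (-(m : ℤ)) m := by
      ext x
      simp only [mem_Ioo, mem_Icc]
      omega
    rw [hIoo, sum_negOnePow_Icc, ← pow_mul, (Nat.even_mul_succ_self m).neg_one_pow]

theorem card_netDegree_sequences_bigraphs_general (n : ℕ) :
    {d : Fin n → ℤ | ∃ B : Bigraph n, B.netDeg = d}.ncard =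
      ((2 * n - 1) ^ n + 1) / 2 := by
  have hset : {d : Fin n → ℤ | ∃ B : Bigraph n, B.netDeg = d} =
      {d ∈ Fintype.piFinset fun _ : Fin n => Ioo (-(n : ℤ)) n | Even (∑ v, d v)} := by
    ext d
    simp [Bigraph.exists_netDeg_eq_iff, abs_lt]
  have hcount := two_mul_card_filter_even_sum_piFinset (ι := Fin n) (Ioo (-(n : ℤ)) n)
  rw [Fintype.card_fin, sum_negOnePow_Ioo_pow_self, Int.card_Ioo,
    show (n - -n - 1 : ℤ).toNat = 2 * n - 1 by omega] at hcount
  rw [hset, Set.ncard_coe_finset]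
  have : 2 * #{d ∈ Fintype.piFinset fun _ : Fin n => Ioo (-(n : ℤ)) n | Even (∑ v, d v)} =
      (2 * n - 1) ^ n + 1 := by exact_mod_cast hcount
  omega

/-- The number of distinct net-degree sequences of bidirected graphs on `n ≥ 1` labelled
vertices is `((2n−1)^n + 1)/2`. -/
theorem card_netDegree_sequences_bigraphs (n : ℕ) (hn : 1 ≤ n) :
    {d : Fin n → ℤ | ∃ B : Bigraph n, B.netDeg = d}.ncard =
      ((2 * n - 1) ^ n + 1) / 2 :=
  card_netDegree_sequences_bigraphs_general n
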